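/- Let (E, S) be a set cover instance with E = {e_1,…,e_n̂} and S = {S_1,…,S_m̂}, let N = n̂² m̂ and l_j = |S_j|, and let I' be the capacitated house allocation instance constructed as follows: for each set S_j there are houses s_j^1,…,s_j^{l_j} of capacity 1 with dummy applicants t_j^1,…,t_j^{l_j} (t_j^l accepts only s_j^l), a house w_j of capacity N, and applicants a_j^1,…,a_j^N with preference a_j^l : x^l ≻ s_j^1 ≻ ⋯ ≻ s_j^{l_j} ≻ w_j; for each element e_i there is an applicant e_i whose preference list is f followed by the houses s_j^l such that e_i ∈ S_j and e_i is the l-th smallest-index element of S_j, in increasing order; there is a house f of capacity 1 with a dummy applicant f' accepting only f; and there are houses x^1,…,x^N of capacity 1 with dummy applicants y^1,…,y^N (y^l accepts only x^l). If (E, S) admits a set cover using k sets, then there is a capacity increase vector r ≥ 0 with |r|_∞ ≤ k such that the instance with capacities q + r admits a perfect popular matching. -/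

import Mathlib

noncomputable section

open Finset

attribute [local instance] Classical.propDecidable

/-- `Better l x y` means the (optional) house `x` is strictly preferred to the (optional)
house `y` according to the strict preference list `l` (earlier in the list = more
preferred); being matched to any acceptable house is preferred to being unmatched. -/
def Better {H : Type*} (l : List H) : Option H → Option H → Prop
  | some h, some h' => h ∈ l ∧ l.idxOf h < l.idxOf h'
  | some h, none => h ∈ l
  | none, _ => False

/-- A capacitated house allocation instance: each applicant `a` has a strict preference
list `pref a` over her acceptable houses (most preferred first, acceptable = on the list),
and each house `h` has a capacity `cap h`. -/
structure HA (A H : Type*) where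
  pref : A → List H
  cap : H → ℕ

namespace HA

variable {A H : Type*} [Fintype A]

/-- A matching assigns to each applicant at most one acceptable house,
respecting the houses' capacities. -/
def IsMatching (I : HA A H) (M : A → Option H) : Prop :=
  (∀ a h, M a = some h → h ∈ I.pref a) ∧
  ∀ h, (univ.filter fun a => M a = some h).card ≤ I.cap h

/-- A matching is perfect if every applicant is matched. -/
def Perfect (M : A → Option H) : Prop := ∀ a, (M a).isSome

/-- `M'` dominates `M` if strictly more applicants prefer `M'` to `M` than
prefer `M` to `M'`. -/
def Dominates (I : HA A H) (M' M : A → Option H) : Prop :=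
  (univ.filter fun a => Better (I.pref a) (M a) (M' a)).card <
    (univ.filter fun a => Better (I.pref a) (M' a) (M a)).card

/-- A matching is popular if no matching dominates it. -/
def Popular (I : HA A H) (M : A → Option H) : Prop :=
  I.IsMatching M ∧ ∀ M', I.IsMatching M' → ¬ I.Dominates M' M

/-- `M'` Pareto-dominates `M` if every applicant is at least as well off in `M'`,
and some applicant is strictly better off. -/
def ParetoDominates (I : HA A H) (M' M : A → Option H) : Prop :=
  (∀ a, M' a = M a ∨ Better (I.pref a) (M' a) (M a)) ∧
  ∃ a, Better (I.pref a) (M' a) (M a)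

/-- A matching is Pareto-optimal if no matching Pareto-dominates it. -/
def ParetoOptimal (I : HA A H) (M : A → Option H) : Prop :=
  I.IsMatching M ∧ ∀ M', I.IsMatching M' → ¬ I.ParetoDominates M' M

/-- The cardinality of a matching: the number of matched applicants. -/
def size (M : A → Option H) : ℕ := (univ.filter fun a => (M a).isSome).card

/-- `f(a)`: the most preferred acceptable house of `a` (if any). -/
def fOpt (I : HA A H) (a : A) : Option H := (I.pref a).head?

/-- The admirers of a house `h`: the applicants whose most preferred house is `h`. -/
def admirers (I : HA A H) (h : H) : Finset A := univ.filter fun a => I.fOpt a = some h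

/-- `s(a)`: equals `f(a)` if `f(a)` has at most `cap (f a)` admirers; otherwise the
most preferred acceptable house of `a` having strictly fewer admirers than its
capacity; `none` if no such house exists. -/
def sOpt (I : HA A H) (a : A) : Option H :=
  match (I.pref a).head? with
  | none => none
  | some h =>
    if (I.admirers h).card ≤ I.cap h then some h
    else (I.pref a).find? fun h' => decide ((I.admirers h').card < I.cap h')

/-- `(a, h)` is an edge of the first/second-choice multigraph `G'`. -/
def InG' (I : HA A H) (a : A) (h : H) : Prop := I.fOpt a = some h ∨ I.sOpt a = some h

/-- The set of applicants matched to house `h` in `M`. -/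
def matchedTo (M : A → Option H) (h : H) : Finset A := univ.filter fun a => M a = some h

/-- An admissible matching: every edge lies in `G'`; every house having at least as many
admirers as its capacity is saturated by admirers only; and every house having at most
as many admirers as its capacity has all its admirers matched to it. -/
def Admissible (I : HA A H) (M : A → Option H) : Prop :=
  I.IsMatching M ∧
  (∀ a h, M a = some h → I.InG' a h) ∧
  (∀ h, I.cap h ≤ (I.admirers h).card →
      (matchedTo M h).card = I.cap h ∧ ∀ a ∈ matchedTo M h, I.fOpt a = some h) ∧
  (∀ h, (I.admirers h).card ≤ I.cap h → ∀ a ∈ I.admirers h, M a = some h)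

end HA

/-- Houses of the set-cover reduction: `s_j^l` (for `l < |S_j|`), `w_j`, `f`, and
`x^1, …, x^N` where `N = n̂² m̂`. -/
abbrev HouseSC (n m : ℕ) (S : Fin m → Finset (Fin n)) :=
  (Σ j : Fin m, Fin (S j).card) ⊕ (Fin m ⊕ (Unit ⊕ Fin (n ^ 2 * m)))

/-- Applicants of the set-cover reduction: the dummies `t_j^l`, the applicants `a_j^l`,
the element applicants `e_i`, the dummy `f'`, and the dummies `y^l`. -/
abbrev ApplSC (n m : ℕ) (S : Fin m → Finset (Fin n)) :=
  (Σ j : Fin m, Fin (S j).card) ⊕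
    ((Fin m × Fin (n ^ 2 * m)) ⊕ (Fin n ⊕ (Unit ⊕ Fin (n ^ 2 * m))))

def hsSC {n m : ℕ} {S : Fin m → Finset (Fin n)} (p : Σ j : Fin m, Fin (S j).card) :
    HouseSC n m S := Sum.inl p
def hwSC {n m : ℕ} {S : Fin m → Finset (Fin n)} (j : Fin m) : HouseSC n m S :=
  Sum.inr (Sum.inl j)
def hfSC {n m : ℕ} {S : Fin m → Finset (Fin n)} : HouseSC n m S :=
  Sum.inr (Sum.inr (Sum.inl ()))
def hxSC {n m : ℕ} {S : Fin m → Finset (Fin n)} (l : Fin (n ^ 2 * m)) : HouseSC n m S :=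
  Sum.inr (Sum.inr (Sum.inr l))

/-- Initial capacities: `q[s_j^l] = 1`, `q[w_j] = N`, `q[f] = 1`, `q[x^l] = 1`. -/
def capSC {n m : ℕ} {S : Fin m → Finset (Fin n)} : HouseSC n m S → ℕ
  | Sum.inl _ => 1
  | Sum.inr (Sum.inl _) => n ^ 2 * m
  | Sum.inr (Sum.inr (Sum.inl _)) => 1
  | Sum.inr (Sum.inr (Sum.inr _)) => 1

/-- The set-cover reduction instance (with capacity vector `c`):
`t_j^l : s_j^l`; `a_j^l : x^l ≻ s_j^1 ≻ ⋯ ≻ s_j^{l_j} ≻ w_j`; `e_i : f` followed by the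
houses `s_j^l` such that `e_i ∈ S_j` and `e_i` is the `l`-th smallest-index element of
`S_j`, in increasing order of `j`; `f' : f`; `y^l : x^l`. -/
def instSC (n m : ℕ) (S : Fin m → Finset (Fin n)) (c : HouseSC n m S → ℕ) :
    HA (ApplSC n m S) (HouseSC n m S) where
  pref := fun a =>
    match a with
    | Sum.inl p => [hsSC p]
    | Sum.inr (Sum.inl (j, l)) =>
        hxSC l :: (((List.finRange (S j).card).map fun i => hsSC ⟨j, i⟩) ++ [hwSC j])
    | Sum.inr (Sum.inr (Sum.inl i)) =>
        hfSC :: (List.finRange m).filterMap fun j =>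
          if h : i ∈ S j then
            some (hsSC ⟨j, ((S j).orderIsoOfFin rfl).symm ⟨i, h⟩⟩)
          else none
    | Sum.inr (Sum.inr (Sum.inr (Sum.inl _))) => [hfSC]
    | Sum.inr (Sum.inr (Sum.inr (Sum.inr l))) => [hxSC l]
  cap := c

/-!
Choose for every element `e_i` a cover set `S (σ i) ∋ e_i`. Add one seat to `s_j^l` when the
`l`-th element of `S_j` chose `S_j`, and `k` seats to every `x^l`. Match `e_i` to its chosen
`s`-house, `a_j^l` to `x^l` if `S_j` is in the cover and to `w_j` otherwise, and each dummy to
its only house. Every applicant then holds her first choice `f(a)` or her `s(a)` (`f` and `x^l` are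
oversubscribed, the latter because `k < m` as soon as some set is left out), and every house with
at least as many admirers as seats is full. Such a matching is popular (the sufficiency half of
the Abraham–Irving–Kavitha–Mehlhorn characterisation): the applicants who move up to a house
`h` in a rival matching push out at least as many admirers of `h`, each of whom moves down.
-/

lemma Better.irrefl {H : Type*} {l : List H} : ∀ o, ¬ Better l o o
  | some _, h => lt_irrefl _ h.2
  | none, h => h

lemma not_better_head? {H : Type*} : ∀ (l : List H) (o : Option H), ¬ Better l o l.head?
  | [], some _, h => by simp [Better] at h
  | _ :: _, some _, h => by simp [Better] at h
  | _, none, h => h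

lemma better_of_head?_eq {H : Type*} {l : List H} {h : H} (hl : l.head? = some h) :
    ∀ {o : Option H}, o ≠ some h → Better l (some h) o := by
  obtain ⟨t, rfl⟩ := List.head?_eq_some_iff.mp hl
  rintro (_ | h') hne
  · exact List.mem_cons_self
  · refine ⟨List.mem_cons_self, ?_⟩
    rw [List.idxOf_cons_self, List.idxOf_cons_ne _ fun e => hne (by rw [e])]
    exact Nat.succ_pos _

lemma List.eq_false_of_idxOf_lt_of_find?_eq_some {α : Type*} [DecidableEq α] {p : α → Bool} :
    ∀ {l : List α} {b x : α}, l.find? p = some b → x ∈ l → l.idxOf x < l.idxOf b →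
      p x = false
  | c :: t, b, x, hf, hx, hlt => by
    by_cases hpc : p c = true
    · obtain rfl : c = b := by simpa [List.find?_cons_of_pos hpc] using hf
      simp at hlt
    · rw [List.find?_cons_of_neg hpc] at hf
      rcases List.mem_cons.mp hx with rfl | hxt
      · simpa using hpc
      · have hbc : b ≠ c := by rintro rfl; exact hpc (List.find?_some hf)
        by_cases hxc : x = c
        · simpa [hxc] using hpc
        rw [List.idxOf_cons_ne _ (Ne.symm hxc), List.idxOf_cons_ne _ (Ne.symm hbc)] at hlt
        exact List.eq_false_of_idxOf_lt_of_find?_eq_some hf hxt (Nat.succ_lt_succ_iff.mp hlt)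

lemma eq_false_of_better_find? {H : Type*} {l : List H} {p : H → Bool} {h : H}
    (hb : Better l (some h) (l.find? p)) : p h = false := by
  cases hf : l.find? p with
  | none =>
    rw [hf] at hb
    simpa using List.find?_eq_none.mp hf h hb
  | some b =>
    rw [hf] at hb
    exact List.eq_false_of_idxOf_lt_of_find?_eq_some hf hb.1 hb.2

lemma List.find?_eq_some_of_unique {α : Type*} {p : α → Bool} :
    ∀ {l : List α} {b : α}, b ∈ l → p b = true → (∀ x ∈ l, p x = true → x = b) →
      l.find? p = some b
  | c :: t, b, hb, hpb, huniq => by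
    by_cases hpc : p c = true
    · rw [List.find?_cons_of_pos hpc, huniq c List.mem_cons_self hpc]
    · rw [List.find?_cons_of_neg hpc]
      refine List.find?_eq_some_of_unique ?_ hpb fun x hx => huniq x (List.mem_cons_of_mem _ hx)
      rcases List.mem_cons.mp hb with rfl | h
      · exact absurd hpb hpc
      · exact h

namespace HA

variable {A H : Type*} [Fintype A] {I : HA A H} {M M' : A → Option H} {a : A} {h : H}

lemma mem_admirers : a ∈ I.admirers h ↔ I.fOpt a = some h := by
  simp [admirers]

lemma mem_matchedTo : a ∈ matchedTo M h ↔ M a = some h := by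
  simp [matchedTo]

lemma sOpt_eq_find?_of_cap_lt {c : H} {t : List H} (hl : I.pref a = c :: t)
    (hc : I.cap c < (I.admirers c).card) :
    I.sOpt a = t.find? fun h => decide ((I.admirers h).card < I.cap h) := by
  have hc' : ¬ (I.admirers c).card ≤ I.cap c := not_le.mpr hc
  have hc'' : ¬ (I.admirers c).card < I.cap c := by omega
  simp only [sOpt, hl, List.head?_cons, if_neg hc', List.find?_cons, hc'', decide_false]

lemma mem_pref_of_sOpt_eq (hs : I.sOpt a = some h) : h ∈ I.pref a := by
  unfold sOpt at hs
  split at hs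
  · simp at hs
  · rename_i c hc
    split_ifs at hs
    · obtain rfl : c = h := by simpa using hs
      exact List.mem_of_mem_head? hc
    · exact List.mem_of_find?_eq_some hs

lemma fOpt_eq_or_card_admirers_lt_of_sOpt_eq (hs : I.sOpt a = some h) :
    I.fOpt a = some h ∨ (I.admirers h).card < I.cap h := by
  unfold sOpt at hs
  split at hs
  · simp at hs
  · rename_i c hc
    split_ifs at hs
    · exact .inl (by rw [fOpt, hc, hs])
    · exact .inr (by simpa using List.find?_some hs)

lemma cap_le_card_admirers_of_better (hMa : M a = I.fOpt a ∨ M a = I.sOpt a)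
    (hb : Better (I.pref a) (some h) (M a)) : I.cap h ≤ (I.admirers h).card := by
  rcases hMa with hf | hs
  · exact absurd (hf ▸ hb) (not_better_head? _ _)
  rw [hs, sOpt] at hb
  split at hb
  · rename_i hc
    rw [← hc] at hb
    exact absurd hb (not_better_head? _ _)
  · rename_i c hc
    split_ifs at hb
    · exact absurd (hc ▸ hb) (not_better_head? _ _)
    · simpa using eq_false_of_better_find? hb

lemma card_better_into_le_card_worse_from (hM' : I.IsMatching M')
    (hT : ∀ a ∈ matchedTo M h, I.fOpt a = some h) (hcap : I.cap h ≤ (matchedTo M h).card) :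
    ((univ.filter fun a => Better (I.pref a) (M' a) (M a)).filter fun a => M' a = some h).card ≤
      ((univ.filter fun a => Better (I.pref a) (M a) (M' a)).filter
        fun a => M a = some h).card := by
  set B := (univ.filter fun a => Better (I.pref a) (M' a) (M a)).filter fun a => M' a = some h
  set T := matchedTo M h
  set T' := T.filter fun a => M' a = some h
  have hdisj : Disjoint B T' := by
    refine Finset.disjoint_left.mpr fun a haB haT' => ?_
    have hM'a : M' a = M a := by
      rw [(mem_filter.mp haB).2, (mem_filter.mp (filter_subset _ _ haT')).2]
    exact Better.irrefl _ (hM'a ▸ (mem_filter.mp (mem_filter.mp haB).1).2)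
  have hBT' : B.card + T'.card ≤ T.card := by
    rw [← card_union_of_disjoint hdisj]
    refine le_trans (card_le_card fun a ha => ?_) ((hM'.2 h).trans hcap)
    rcases mem_union.mp ha with ha | ha <;> simp [(mem_filter.mp ha).2]
  have hlose : T \ T' ⊆ (univ.filter fun a => Better (I.pref a) (M a) (M' a)).filter
      fun a => M a = some h := by
    intro a ha
    obtain ⟨haT, haT'⟩ := mem_sdiff.mp ha
    have hMa : M a = some h := (mem_filter.mp haT).2
    have hne : M' a ≠ some h := fun e => haT' (mem_filter.mpr ⟨haT, e⟩)
    simpa [hMa] using better_of_head?_eq (hT a haT) hne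
  calc B.card ≤ T.card - T'.card := Nat.le_sub_of_add_le hBT'
    _ = (T \ T').card := (card_sdiff_of_subset (filter_subset _ _)).symm
    _ ≤ _ := card_le_card hlose

theorem popular_of_fOpt_or_sOpt (hcap : ∀ h, (matchedTo M h).card ≤ I.cap h)
    (hfs : ∀ a, M a = I.fOpt a ∨ M a = I.sOpt a)
    (hfull : ∀ h, I.cap h ≤ (I.admirers h).card → I.cap h ≤ (matchedTo M h).card) :
    I.Popular M := by
  have hM : I.IsMatching M := by
    refine ⟨fun a h hMa => ?_, hcap⟩
    rcases hfs a with hf | hs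
    · exact List.mem_of_mem_head? (hf ▸ hMa : I.fOpt a = some h)
    · exact mem_pref_of_sOpt_eq (hs ▸ hMa)
  refine ⟨hM, fun M' hM' hdom => hdom.not_ge ?_⟩
  rw [card_eq_sum_card_fiberwise (f := M') (t := univ.image M' ∪ univ.image M)
      fun _ _ => by simp,
    card_eq_sum_card_fiberwise (f := M) (t := univ.image M' ∪ univ.image M)
      fun _ _ => by simp]
  refine sum_le_sum fun o _ => ?_
  rcases (((univ.filter fun a => Better (I.pref a) (M' a) (M a))).filter
    fun a => M' a = o).eq_empty_or_nonempty with hB | ⟨a, ha⟩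
  · simp [hB]
  obtain ⟨haB, rfl⟩ := mem_filter.mp ha
  obtain ⟨h, hM'a⟩ : ∃ h, M' a = some h := Option.ne_none_iff_exists'.mp fun e =>
    by simpa [e, Better] using (mem_filter.mp haB).2
  rw [hM'a]
  have hh := cap_le_card_admirers_of_better (hfs a) (hM'a ▸ (mem_filter.mp haB).2)
  refine card_better_into_le_card_worse_from hM' (fun b hb => ?_) (hfull h hh)
  have hMb : M b = some h := (mem_filter.mp hb).2
  rcases hfs b with hf | hs
  · exact hf ▸ hMb
  · exact (fOpt_eq_or_card_admirers_lt_of_sOpt_eq (hs ▸ hMb)).resolve_right (not_lt.mpr hh)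

end HA

section Reduction

variable {n m : ℕ} {S : Fin m → Finset (Fin n)}

abbrev atSC (p : Σ j : Fin m, Fin (S j).card) : ApplSC n m S := Sum.inl p
abbrev aaSC (j : Fin m) (l : Fin (n ^ 2 * m)) : ApplSC n m S := Sum.inr (Sum.inl (j, l))
abbrev aeSC (i : Fin n) : ApplSC n m S := Sum.inr (Sum.inr (Sum.inl i))
abbrev afSC : ApplSC n m S := Sum.inr (Sum.inr (Sum.inr (Sum.inl ())))
abbrev aySC (l : Fin (n ^ 2 * m)) : ApplSC n m S := Sum.inr (Sum.inr (Sum.inr (Sum.inr l)))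

def eltSC (j : Fin m) (l : Fin (S j).card) : Fin n := (S j).orderIsoOfFin rfl l

def rankSC {i : Fin n} {j : Fin m} (hi : i ∈ S j) : Fin (S j).card :=
  ((S j).orderIsoOfFin rfl).symm ⟨i, hi⟩

lemma sigma_mk_rankSC_eq_iff {i : Fin n} {j' : Fin m} (hi : i ∈ S j') (j : Fin m)
    (l : Fin (S j).card) :
    (⟨j', rankSC hi⟩ : Σ j, Fin (S j).card) = ⟨j, l⟩ ↔ j' = j ∧ i = eltSC j l := by
  constructor
  · rintro h
    obtain rfl := congrArg Sigma.fst h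
    obtain rfl := eq_of_heq (Sigma.mk.inj_iff.mp h).2
    simp [eltSC, rankSC]
  · rintro ⟨rfl, rfl⟩
    exact congrArg (Sigma.mk j') (((S j').orderIsoOfFin rfl).symm_apply_apply l)

lemma eltSC_rankSC {i : Fin n} {j : Fin m} (hi : i ∈ S j) : eltSC j (rankSC hi) = i := by
  simp [eltSC, rankSC]

variable (c : HouseSC n m S → ℕ)

@[simp] lemma fOpt_atSC (p) : (instSC n m S c).fOpt (atSC p) = some (hsSC p) := rfl
@[simp] lemma fOpt_aaSC (j l) : (instSC n m S c).fOpt (aaSC j l) = some (hxSC l) := rfl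
@[simp] lemma fOpt_aeSC (i) : (instSC n m S c).fOpt (aeSC i) = some hfSC := rfl
@[simp] lemma fOpt_afSC : (instSC n m S c).fOpt afSC = some hfSC := rfl
@[simp] lemma fOpt_aySC (l) : (instSC n m S c).fOpt (aySC l) = some (hxSC l) := rfl

lemma admirers_hsSC (p) : (instSC n m S c).admirers (hsSC p) = {atSC p} := by
  ext a
  rcases a with _ | ⟨_, _⟩ | _ | ⟨⟨⟩⟩ | _ <;> simp [HA.mem_admirers, hsSC, hxSC, hfSC]

lemma admirers_hwSC (j) : (instSC n m S c).admirers (hwSC j) = ∅ := by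
  ext a
  rcases a with _ | ⟨_, _⟩ | _ | ⟨⟨⟩⟩ | _ <;>
    simp [HA.mem_admirers, hsSC, hwSC, hxSC, hfSC]

lemma admirers_hfSC : (instSC n m S c).admirers hfSC = insert afSC (univ.image aeSC) := by
  ext a
  rcases a with _ | ⟨_, _⟩ | _ | ⟨⟨⟩⟩ | _ <;> simp [HA.mem_admirers, hsSC, hxSC, hfSC]

lemma admirers_hxSC (l) :
    (instSC n m S c).admirers (hxSC l) = insert (aySC l) (univ.image fun j => aaSC j l) := by
  ext a
  rcases a with _ | ⟨_, _⟩ | _ | ⟨⟨⟩⟩ | _ <;>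
    simp [HA.mem_admirers, hsSC, hxSC, hfSC, eq_comm]

lemma card_admirers_hfSC : ((instSC n m S c).admirers hfSC).card = n + 1 := by
  rw [admirers_hfSC, card_insert_of_notMem (by simp),
    card_image_of_injective _ fun _ _ h => by simpa using h, card_univ, Fintype.card_fin]

lemma card_admirers_hxSC (l) : ((instSC n m S c).admirers (hxSC l)).card = m + 1 := by
  rw [admirers_hxSC, card_insert_of_notMem (by simp),
    card_image_of_injective _ fun _ _ h => by simpa using h, card_univ, Fintype.card_fin]

variable (σ : Fin n → Fin m)

def incrSC (k : ℕ) : HouseSC n m S → ℕ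
  | Sum.inl ⟨j, l⟩ => if σ (eltSC j l) = j then 1 else 0
  | Sum.inr (Sum.inl _) => 0
  | Sum.inr (Sum.inr (Sum.inl _)) => 0
  | Sum.inr (Sum.inr (Sum.inr _)) => k

lemma incrSC_le {k : ℕ} (hk : 0 < n → 0 < k) : ∀ h : HouseSC n m S, incrSC σ k h ≤ k
  | Sum.inl ⟨j, l⟩ => by
    have := hk (eltSC j l).pos
    simp only [incrSC]
    split_ifs <;> omega
  | Sum.inr (Sum.inl _) | Sum.inr (Sum.inr (Sum.inl _)) => Nat.zero_le k
  | Sum.inr (Sum.inr (Sum.inr _)) => le_rfl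

variable (S) in
abbrev coverInstSC (k : ℕ) : HA (ApplSC n m S) (HouseSC n m S) :=
  instSC n m S fun h => capSC h + incrSC σ k h

lemma card_admirers_lt_cap_hsSC_iff (k : ℕ) (j : Fin m) (l : Fin (S j).card) :
    ((coverInstSC S σ k).admirers (hsSC ⟨j, l⟩)).card <
      (coverInstSC S σ k).cap (hsSC ⟨j, l⟩) ↔ σ (eltSC j l) = j := by
  rw [admirers_hsSC, card_singleton]
  change 1 < 1 + (if σ (eltSC j l) = j then 1 else 0) ↔ _
  split_ifs <;> simp [*]

variable (hσS : ∀ i, i ∈ S (σ i))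

lemma sOpt_aeSC (k : ℕ) (i : Fin n) :
    (coverInstSC S σ k).sOpt (aeSC i) = some (hsSC ⟨σ i, rankSC (hσS i)⟩) := by
  have hf : (coverInstSC S σ k).cap hfSC < ((coverInstSC S σ k).admirers hfSC).card := by
    rw [card_admirers_hfSC]
    exact Nat.succ_lt_succ i.pos
  rw [HA.sOpt_eq_find?_of_cap_lt rfl hf]
  refine List.find?_eq_some_of_unique ?_ ?_ fun x hx hpx => ?_
  · exact List.mem_filterMap.mpr ⟨σ i, List.mem_finRange _, by rw [dif_pos (hσS i)]; rfl⟩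
  · simp [card_admirers_lt_cap_hsSC_iff, eltSC_rankSC]
  · obtain ⟨j, -, hj⟩ := List.mem_filterMap.mp hx
    by_cases hij : i ∈ S j
    · obtain rfl : hsSC ⟨j, rankSC hij⟩ = x := by simpa [hij, rankSC] using hj
      rw [decide_eq_true_eq, card_admirers_lt_cap_hsSC_iff, eltSC_rankSC] at hpx
      subst hpx
      rfl
    · simp [hij] at hj

lemma sOpt_aaSC {k : ℕ} (hkm : k < m) {j : Fin m} (hj : ∀ i, σ i ≠ j) (l : Fin (n ^ 2 * m)) :
    (coverInstSC S σ k).sOpt (aaSC j l) = some (hwSC j) := by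
  have hx : (coverInstSC S σ k).cap (hxSC l) < ((coverInstSC S σ k).admirers (hxSC l)).card := by
    rw [card_admirers_hxSC]
    change 1 + k < m + 1
    omega
  rw [HA.sOpt_eq_find?_of_cap_lt rfl hx]
  refine List.find?_eq_some_of_unique (List.mem_append_right _ (List.mem_singleton_self _)) ?_
    fun x hx hpx => ?_
  · rw [decide_eq_true_eq, admirers_hwSC, card_empty]
    exact l.pos
  · rcases List.mem_append.mp hx with hx | hx
    · obtain ⟨l', -, rfl⟩ := List.mem_map.mp hx
      rw [decide_eq_true_eq, card_admirers_lt_cap_hsSC_iff] at hpx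
      exact absurd hpx (hj _)
    · exact List.mem_singleton.mp hx

variable (J : Finset (Fin m))

def matchSC : ApplSC n m S → Option (HouseSC n m S)
  | Sum.inl p => some (hsSC p)
  | Sum.inr (Sum.inl (j, l)) => some (if j ∈ J then hxSC l else hwSC j)
  | Sum.inr (Sum.inr (Sum.inl i)) => some (hsSC ⟨σ i, rankSC (hσS i)⟩)
  | Sum.inr (Sum.inr (Sum.inr (Sum.inl _))) => some hfSC
  | Sum.inr (Sum.inr (Sum.inr (Sum.inr l))) => some (hxSC l)

lemma matchSC_perfect : HA.Perfect (matchSC σ hσS J) := by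
  rintro (_ | _ | _ | _ | _) <;> rfl

lemma matchedTo_matchSC_hsSC (j : Fin m) (l : Fin (S j).card) :
    HA.matchedTo (matchSC σ hσS J) (hsSC ⟨j, l⟩) =
      if σ (eltSC j l) = j then {atSC ⟨j, l⟩, aeSC (eltSC j l)} else {atSC ⟨j, l⟩} := by
  ext a
  rcases a with _ | ⟨j', _⟩ | i | ⟨⟨⟩⟩ | _
  · split_ifs <;> simp [HA.mem_matchedTo, matchSC, hsSC]
  · split_ifs <;> by_cases j' ∈ J <;> simp_all [HA.mem_matchedTo, matchSC, hsSC, hxSC, hwSC]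
  · have hmatch :
        matchSC σ hσS J (aeSC i) = some (hsSC ⟨j, l⟩) ↔ σ i = j ∧ i = eltSC j l :=
      (Option.some_inj.trans Sum.inl_injective.eq_iff).trans (sigma_mk_rankSC_eq_iff _ j l)
    rw [HA.mem_matchedTo, hmatch]
    split_ifs with hj
    · simp only [mem_insert, mem_singleton, reduceCtorEq, false_or, Sum.inr.injEq,
        Sum.inl.injEq]
      exact ⟨And.right, fun h => ⟨h ▸ hj, h⟩⟩
    · simp only [mem_singleton, reduceCtorEq, iff_false, not_and]
      rintro hσi rfl
      exact hj hσi
  all_goals split_ifs <;> simp [HA.mem_matchedTo, matchSC, hsSC, hxSC, hfSC]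

lemma card_matchedTo_matchSC_hsSC (k : ℕ) (j : Fin m) (l : Fin (S j).card) :
    (HA.matchedTo (matchSC σ hσS J) (hsSC ⟨j, l⟩)).card =
      (coverInstSC S σ k).cap (hsSC ⟨j, l⟩) := by
  change _ = 1 + if σ (eltSC j l) = j then 1 else 0
  rw [matchedTo_matchSC_hsSC]
  split_ifs <;> simp

lemma matchedTo_matchSC_hfSC : HA.matchedTo (matchSC σ hσS J) hfSC = {afSC} := by
  ext a
  rcases a with _ | ⟨j', _⟩ | _ | ⟨⟨⟩⟩ | _
  · simp [HA.mem_matchedTo, matchSC, hsSC, hfSC]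
  · by_cases j' ∈ J <;> simp_all [HA.mem_matchedTo, matchSC, hxSC, hwSC, hfSC]
  all_goals simp [HA.mem_matchedTo, matchSC, hsSC, hxSC, hfSC]

lemma matchedTo_matchSC_hxSC (l : Fin (n ^ 2 * m)) :
    HA.matchedTo (matchSC σ hσS J) (hxSC l) = insert (aySC l) (J.image fun j => aaSC j l) := by
  ext a
  rcases a with _ | ⟨j', _⟩ | _ | ⟨⟨⟩⟩ | _
  · simp [HA.mem_matchedTo, matchSC, hsSC, hxSC]
  · by_cases j' ∈ J <;> simp_all [HA.mem_matchedTo, matchSC, hxSC, hwSC, eq_comm]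
  all_goals simp [HA.mem_matchedTo, matchSC, hsSC, hxSC, hfSC]

lemma card_matchedTo_matchSC_hfSC (k : ℕ) :
    (HA.matchedTo (matchSC σ hσS J) hfSC).card = (coverInstSC S σ k).cap hfSC := by
  rw [matchedTo_matchSC_hfSC, card_singleton]
  rfl

lemma card_matchedTo_matchSC_hxSC (l : Fin (n ^ 2 * m)) :
    (HA.matchedTo (matchSC σ hσS J) (hxSC l)).card = (coverInstSC S σ J.card).cap (hxSC l) := by
  rw [matchedTo_matchSC_hxSC, card_insert_of_notMem (by simp),
    card_image_of_injective _ fun _ _ h => by simpa using h]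
  exact add_comm _ _

lemma card_matchedTo_matchSC_hwSC_le (k : ℕ) (j : Fin m) :
    (HA.matchedTo (matchSC σ hσS J) (hwSC j)).card ≤ (coverInstSC S σ k).cap (hwSC j) := by
  have hsub : HA.matchedTo (matchSC σ hσS J) (hwSC j) ⊆ univ.image (aaSC j) := by
    intro a ha
    rw [HA.mem_matchedTo] at ha
    rcases a with _ | ⟨j', _⟩ | _ | ⟨⟨⟩⟩ | _
    · simp [matchSC, hsSC, hwSC] at ha
    · by_cases j' ∈ J <;> simp_all [matchSC, hxSC, hwSC]
    all_goals simp [matchSC, hsSC, hxSC, hwSC, hfSC] at ha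
  exact (card_le_card hsub).trans (card_image_le.trans_eq (card_fin _))

lemma matchSC_popular (hσJ : ∀ i, σ i ∈ J) :
    (coverInstSC S σ J.card).Popular (matchSC σ hσS J) := by
  refine HA.popular_of_fOpt_or_sOpt ?cap ?fOpt_or_sOpt ?full
  case cap =>
    rintro (⟨j, l⟩ | j | ⟨⟨⟩⟩ | l)
    · exact (card_matchedTo_matchSC_hsSC σ hσS J _ j l).le
    · exact card_matchedTo_matchSC_hwSC_le σ hσS J _ j
    · exact (card_matchedTo_matchSC_hfSC σ hσS J _).le
    · exact (card_matchedTo_matchSC_hxSC σ hσS J l).le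
  case fOpt_or_sOpt =>
    rintro (_ | ⟨j, l⟩ | i | ⟨⟨⟩⟩ | _)
    · exact .inl rfl
    · by_cases hj : j ∈ J
      · exact .inl (by simp [matchSC, hj])
      · refine .inr ?_
        rw [sOpt_aaSC σ (card_lt_univ_of_notMem hj |>.trans_eq (by simp))
          (j := j) (fun i h => hj (h ▸ hσJ i))]
        simp [matchSC, hj]
    · exact .inr (sOpt_aeSC σ hσS _ i).symm
    all_goals exact .inl rfl
  case full =>
    rintro (⟨j, l⟩ | j | ⟨⟨⟩⟩ | l) hfull
    · exact (card_matchedTo_matchSC_hsSC σ hσS J _ j l).ge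
    · exact hfull.trans ((card_eq_zero.mpr (admirers_hwSC _ j)).trans_le (Nat.zero_le _))
    · exact (card_matchedTo_matchSC_hfSC σ hσS J _).ge
    · exact (card_matchedTo_matchSC_hxSC σ hσS J l).ge

end Reduction

/-- if the set cover instance `(E, S)` admits a set cover using `k` sets,
then there is a capacity increase vector `r ≥ 0` with `|r|_∞ ≤ k` such that the
reduction instance with capacities `q + r` admits a perfect popular matching. -/
theorem setCover_gives_increase (n m k : ℕ) (S : Fin m → Finset (Fin n))
    (J : Finset (Fin m)) (hJcard : J.card = k) (hJcover : ∀ i, ∃ j ∈ J, i ∈ S j) :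
    ∃ r : HouseSC n m S → ℕ, (∀ h, r h ≤ k) ∧
      ∃ M, HA.Perfect M ∧ (instSC n m S fun h => capSC h + r h).Popular M := by
  choose σ hσJ hσS using hJcover
  subst hJcard
  refine ⟨incrSC σ J.card, incrSC_le σ fun hn => card_pos.mpr ⟨σ ⟨0, hn⟩, hσJ _⟩,
    matchSC σ hσS J, matchSC_perfect σ hσS J, matchSC_popular σ hσS J hσJ⟩
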